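/- If x, y, z are nonempty words over {A,B,C} such that x y x z y z x y x is squarefree, then no two of x, y, z can both have the form 'letter, other letter, first letter' (i.e., at most one of x, y, z is of the form UVU with U ≠ V letters). -/

import Mathlib

inductive T where
  | A | B | C
deriving DecidableEq, Repr

open T

def P : T → List T
  | A => [A,B,C,B,A,C,B,C,A,B,C,B,A]
  | B => [B,C,A,C,B,A,C,A,B,C,A,C,B]
  | C => [C,A,B,A,C,B,A,B,C,A,B,A,C]

def Pw (w : List T) : List T := w.flatMap P

def SqFree (w : List T) : Prop := ∀ x : List T, x ≠ [] → ¬ (x ++ x) <:+: w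

def rot : T → T
  | A => B
  | B => C
  | C => A

def rotw (w : List T) : List T := w.map rot

def refT : T → T
  | A => A
  | B => C
  | C => B

def reflw (w : List T) : List T := w.map refT

def OccursAt (w v : List T) (i : ℕ) : Prop := (v.drop i).take w.length = w

def IsUVU (w : List T) : Prop := ∃ u v : T, u ≠ v ∧ w = [u, v, u]

/-!
Squarefreeness forces the letter next to a factor `uvu` to be the third letter of the
alphabet: `uvuu` contains `uu` and `uvuv` is a square. If two of `x, y, z` had the form
`UVU`, the word contains both of them followed (or both preceded) by the same letter, so
they are built from the same two letters, and their concatenation, which also occurs,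
is `uvuuvu` or `uvuvuv`, neither of which is squarefree.
-/

lemma T.eq_or_eq_of_ne_of_ne {u v c a : T} (huv : u ≠ v) (hcu : c ≠ u) (hcv : c ≠ v)
    (hac : a ≠ c) : a = u ∨ a = v := by
  cases u <;> cases v <;> cases c <;> cases a <;> simp_all

lemma SqFree.of_infix {w v : List T} (h : SqFree w) (hv : v <:+: w) : SqFree v :=
  fun s hs hinf => h s hs (hinf.trans hv)

lemma SqFree.ne_of_uvu_append_cons {u v c : T} {w : List T}
    (h : SqFree ([u, v, u] ++ c :: w)) : c ≠ u ∧ c ≠ v := by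
  constructor <;> rintro rfl
  · exact h [c] (by simp) ⟨[c, v], w, rfl⟩
  · exact h [u, c] (by simp) ⟨[], w, rfl⟩

lemma SqFree.ne_of_concat_append_uvu {u v c : T} {w : List T}
    (h : SqFree (w ++ [c] ++ [u, v, u])) : c ≠ u ∧ c ≠ v := by
  constructor <;> rintro rfl
  · exact h [c] (by simp) ⟨w, [v, c], by simp⟩
  · exact h [c, u] (by simp) ⟨w, [], by simp⟩

lemma not_sqFree_uvu_append_uvu {u v a b c : T} (huv : u ≠ v) (hab : a ≠ b)
    (hcu : c ≠ u) (hcv : c ≠ v) (hca : c ≠ a) (hcb : c ≠ b) :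
    ¬ SqFree ([u, v, u] ++ [a, b, a]) := by
  intro h
  rcases T.eq_or_eq_of_ne_of_ne huv hcu hcv (Ne.symm hca) with rfl | rfl <;>
    rcases T.eq_or_eq_of_ne_of_ne huv hcu hcv (Ne.symm hcb) with rfl | rfl
  · exact hab rfl
  · exact h [a] (by simp) ⟨[a, b], [b, a], rfl⟩
  · exact h [b, a] (by simp) ⟨[], [b, a], rfl⟩
  · exact hab rfl

lemma not_sqFree_append_of_isUVU_right {x y w : List T} (hx : IsUVU x) (hy : IsUVU y)
    (hw : w ≠ []) (hxw : SqFree (x ++ w)) (hyw : SqFree (y ++ w)) : ¬ SqFree (x ++ y) := by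
  obtain ⟨u, v, huv, rfl⟩ := hx
  obtain ⟨a, b, hab, rfl⟩ := hy
  obtain ⟨c, w, rfl⟩ := List.exists_cons_of_ne_nil hw
  obtain ⟨hcu, hcv⟩ := hxw.ne_of_uvu_append_cons
  obtain ⟨hca, hcb⟩ := hyw.ne_of_uvu_append_cons
  exact not_sqFree_uvu_append_uvu huv hab hcu hcv hca hcb

lemma not_sqFree_append_of_isUVU_left {x y w : List T} (hx : IsUVU x) (hy : IsUVU y)
    (hw : w ≠ []) (hwx : SqFree (w ++ x)) (hwy : SqFree (w ++ y)) : ¬ SqFree (x ++ y) := by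
  obtain ⟨u, v, huv, rfl⟩ := hx
  obtain ⟨a, b, hab, rfl⟩ := hy
  obtain ⟨w, c, rfl⟩ := (List.eq_nil_or_concat w).resolve_left hw
  rw [List.concat_eq_append] at hwx hwy
  obtain ⟨hcu, hcv⟩ := hwx.ne_of_concat_append_uvu
  obtain ⟨hca, hcb⟩ := hwy.ne_of_concat_append_uvu
  exact not_sqFree_uvu_append_uvu huv hab hcu hcv hca hcb

lemma SqFree.factors {x y z : List T} (h : SqFree (x ++ y ++ x ++ z ++ y ++ z ++ x ++ y ++ x)) :
    SqFree (x ++ y) ∧ SqFree (y ++ x) ∧ SqFree (x ++ z) ∧ SqFree (y ++ z) :=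
  ⟨h.of_infix ⟨[], x ++ z ++ y ++ z ++ x ++ y ++ x, by simp⟩,
    h.of_infix ⟨x, z ++ y ++ z ++ x ++ y ++ x, by simp⟩,
    h.of_infix ⟨x ++ y, y ++ z ++ x ++ y ++ x, by simp⟩,
    h.of_infix ⟨x ++ y ++ x ++ z, x ++ y ++ x, by simp⟩⟩

theorem stmt18 (x y z : List T)
    (hx : x ≠ []) (hy : y ≠ []) (hz : z ≠ [])
    (h : SqFree (x ++ y ++ x ++ z ++ y ++ z ++ x ++ y ++ x)) :
    ¬ (IsUVU x ∧ IsUVU y) ∧ ¬ (IsUVU x ∧ IsUVU z) ∧ ¬ (IsUVU y ∧ IsUVU z) := by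
  obtain ⟨hxy, hyx, hxz, hyz⟩ := h.factors
  exact ⟨fun ⟨hX, hY⟩ => not_sqFree_append_of_isUVU_right hX hY hz hxz hyz hxy,
    fun ⟨hX, hZ⟩ => not_sqFree_append_of_isUVU_left hX hZ hy hyx hyz hxz,
    fun ⟨hY, hZ⟩ => not_sqFree_append_of_isUVU_left hY hZ hx hxy hxz hyz⟩
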